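/- (Proposition 4, second part.) Let Λ be a map assigning to each pair (Σ,Ω) of n×n real symmetric positive semidefinite matrices an n×n real matrix Λ(Σ,Ω), which is split-invariant, rotation-invariant, cash-invariant (Λ(α²Σ, Ω) = α Λ(Σ,Ω) for every α > 0), and direct-invariant (Λ(diag(σ)², diag(ω)²) = Σᵢ Λ(σᵢ² eᵢeᵢᵀ, ωᵢ² eᵢeᵢᵀ) for all vectors σ, ω with nonnegative entries, where eᵢ is the i-th standard basis vector). Then there exists a constant c ∈ ℝ such that Λ(diag(μ), I) = c · diag(μ)^{1/2} for every diagonal positive semidefinite matrix diag(μ), and Λ(Σ,Ω) = c · Λ_kyle(Σ,Ω) for every symmetric positive semidefinite Σ and symmetric positive definite Ω. -/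

import Mathlib

open Matrix
open scoped Classical

/-- `sqrtm A` is the unique symmetric positive semidefinite square root of a
symmetric positive semidefinite real matrix `A` (junk value `0` otherwise). -/
noncomputable def sqrtm {n : ℕ} (A : Matrix (Fin n) (Fin n) ℝ) : Matrix (Fin n) (Fin n) ℝ :=
  if h : A.PosSemidef then
    (h.1.eigenvectorUnitary : Matrix (Fin n) (Fin n) ℝ) *
      diagonal ((↑) ∘ (√·) ∘ h.1.eigenvalues) * (star h.1.eigenvectorUnitary : Matrix (Fin n) (Fin n) ℝ)
  else 0

/-- The Kyle cross-impact matrix `Λ_kyle(Σ,Ω) = (√Ω)⁻¹ √(√Ω Σ √Ω) (√Ω)⁻¹`. -/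
noncomputable def kyle {n : ℕ} (S W : Matrix (Fin n) (Fin n) ℝ) : Matrix (Fin n) (Fin n) ℝ :=
  (sqrtm W)⁻¹ * sqrtm (sqrtm W * S * sqrtm W) * (sqrtm W)⁻¹

section helpers
variable {n : ℕ}

private lemma diag_inv (d : Fin n → ℝ) (hd : ∀ i, 0 < d i) :
    (diagonal d)⁻¹ = diagonal (fun i => (d i)⁻¹) := by
  apply inv_eq_right_inv
  rw [diagonal_mul_diagonal]
  have h : (fun i => d i * (d i)⁻¹) = fun _ => (1:ℝ) := funext fun i => mul_inv_cancel₀ (hd i).ne'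
  rw [h, diagonal_one]

private lemma std_eq_diag (i : Fin n) : single i i (1:ℝ) = diagonal (Pi.single i 1) := by
  ext a b
  simp [single, diagonal, Pi.single_apply]
  aesop

private lemma std_psd (i : Fin n) : (single i i (1:ℝ)).PosSemidef := by
  rw [std_eq_diag]
  exact posSemidef_diagonal_iff.mpr fun j => by by_cases h : j = i <;> simp [Pi.single_apply, h]

private lemma perm_orth (e : Equiv.Perm (Fin n)) :
    (Matrix.of fun a b => if e a = b then (1:ℝ) else 0) *
      (Matrix.of fun a b => if e a = b then (1:ℝ) else 0)ᵀ = 1 := by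
  ext a b
  simp [Matrix.mul_apply, Matrix.one_apply, ite_and, Finset.sum_ite_eq, e.injective.eq_iff, eq_comm]

private lemma perm_conj (e : Equiv.Perm (Fin n)) (X : Matrix (Fin n) (Fin n) ℝ) :
    (Matrix.of fun a b => if e a = b then (1:ℝ) else 0) * X *
      (Matrix.of fun a b => if e a = b then (1:ℝ) else 0)ᵀ = Matrix.of fun a b => X (e a) (e b) := by
  ext a b
  simp [Matrix.mul_apply, ite_and, Finset.sum_ite_eq, mul_comm]

private lemma posdef_conj {O D : Matrix (Fin n) (Fin n) ℝ} (hD : D.PosDef) (hO : O * Oᵀ = 1) :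
    (O * D * Oᵀ).PosDef := by
  refine Matrix.PosDef.of_dotProduct_mulVec_pos ?_ ?_
  · show (O * D * Oᵀ)ᴴ = _
    rw [conjTranspose_eq_transpose_of_trivial, transpose_mul, transpose_mul, transpose_transpose,
      ← conjTranspose_eq_transpose_of_trivial D, hD.1.eq, mul_assoc]
  · intro x hx
    have h1 : star x ⬝ᵥ (O * D * Oᵀ) *ᵥ x = star (Oᵀ *ᵥ x) ⬝ᵥ D *ᵥ (Oᵀ *ᵥ x) := by
      rw [star_mulVec, conjTranspose_eq_transpose_of_trivial, transpose_transpose,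
        ← mulVec_mulVec, ← mulVec_mulVec, dotProduct_mulVec (star x)]
    rw [h1]
    apply hD.dotProduct_mulVec_pos
    intro h0
    apply hx
    have hinv : O *ᵥ (Oᵀ *ᵥ x) = x := by rw [mulVec_mulVec, hO, one_mulVec]
    rw [← hinv, h0, mulVec_zero]

private lemma sqrt_posdef {W : Matrix (Fin n) (Fin n) ℝ} (hW : W.PosDef) :
    (sqrtm W).PosDef := by
  rw [sqrtm, dif_pos hW.posSemidef]
  have hU := (Matrix.mem_unitaryGroup_iff).mp (hW.posSemidef.1.eigenvectorUnitary).2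
  have hU' : (hW.posSemidef.1.eigenvectorUnitary : Matrix (Fin n) (Fin n) ℝ)ᵀ
      = star (hW.posSemidef.1.eigenvectorUnitary : Matrix (Fin n) (Fin n) ℝ) := by
    rw [star_eq_conjTranspose, conjTranspose_eq_transpose_of_trivial]
  rw [← hU']
  apply posdef_conj _ (by rw [hU', hU])
  apply Matrix.PosDef.diagonal
  intro i
  simp only [Function.comp_apply, RCLike.ofReal_real_eq_id, id_eq]
  exact Real.sqrt_pos.mpr (hW.eigenvalues_pos i)

open scoped MatrixOrder in
private lemma sqrtm_eq_cfc {A : Matrix (Fin n) (Fin n) ℝ} (hA : A.PosSemidef) :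
    sqrtm A = CFC.sqrt A := by
  rw [CFC.sqrt_eq_cfc, cfc_nnreal_eq_real _ A, hA.1.cfc_eq, sqrtm, dif_pos hA]
  simp only [IsHermitian.cfc, Unitary.conjStarAlgAut_apply]
  congr 3
  funext i
  simp [hA.eigenvalues_nonneg i]

open scoped MatrixOrder in
private lemma sqrtm_mul_self' {A : Matrix (Fin n) (Fin n) ℝ} (hA : A.PosSemidef) :
    sqrtm A * sqrtm A = A := by
  rw [sqrtm_eq_cfc hA]
  exact CFC.sqrt_mul_sqrt_self A hA.nonneg

open scoped MatrixOrder in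
private lemma sqrtm_eq_of_sq {A C : Matrix (Fin n) (Fin n) ℝ} (hC : C.PosSemidef) (hA : A.PosSemidef)
    (h : C ^ 2 = A) : sqrtm A = C := by
  rw [sqrtm_eq_cfc hA]
  exact CFC.sqrt_unique (by rw [← pow_two]; exact h) hC.nonneg

end helpers

/-- Proposition 4, second part: a split-, rotation-, cash- and
direct-invariant return-covariance based model is the Kyle model up to a constant. -/
theorem return_based_all_symmetries_eq_kyle {n : ℕ}
    (Λ : Matrix (Fin n) (Fin n) ℝ → Matrix (Fin n) (Fin n) ℝ → Matrix (Fin n) (Fin n) ℝ)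
    (hsplit : ∀ S W : Matrix (Fin n) (Fin n) ℝ, S.PosSemidef → W.PosSemidef → ∀ d : Fin n → ℝ, (∀ i, 0 < d i) →
      Λ ((diagonal d)⁻¹ * S * (diagonal d)⁻¹) (diagonal d * W * diagonal d)
        = (diagonal d)⁻¹ * Λ S W * (diagonal d)⁻¹)
    (hrot : ∀ S W : Matrix (Fin n) (Fin n) ℝ, S.PosSemidef → W.PosSemidef → ∀ O : Matrix (Fin n) (Fin n) ℝ, O * Oᵀ = 1 →
      Λ (O * S * Oᵀ) (O * W * Oᵀ) = O * Λ S W * Oᵀ)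
    (hcash : ∀ S W : Matrix (Fin n) (Fin n) ℝ, S.PosSemidef → W.PosSemidef → ∀ α : ℝ, 0 < α →
      Λ ((α ^ 2) • S) W = α • Λ S W)
    (hdirect : ∀ σ ω : Fin n → ℝ, (∀ i, 0 ≤ σ i) → (∀ i, 0 ≤ ω i) →
      Λ (diagonal σ * diagonal σ) (diagonal ω * diagonal ω)
        = ∑ i : Fin n, Λ ((σ i ^ 2) • single i i 1) ((ω i ^ 2) • single i i 1)) :
    ∃ c : ℝ,
      (∀ μ : Fin n → ℝ, (∀ i, 0 ≤ μ i) →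
        Λ (diagonal μ) 1 = c • diagonal (fun i => Real.sqrt (μ i))) ∧
      (∀ S W : Matrix (Fin n) (Fin n) ℝ, S.PosSemidef → W.PosDef → Λ S W = c • kyle S W) := by
  classical
  by_cases hn : Nonempty (Fin n)
  case neg =>
    haveI : IsEmpty (Fin n) := not_nonempty_iff.mp hn
    exact ⟨0, fun μ _ => by ext i j; exact isEmptyElim i,
      fun S W _ _ => by ext i j; exact isEmptyElim i⟩
  obtain ⟨i₀⟩ := hn
  -- support lemma
  have hsupp : ∀ (i : Fin n) (S : Matrix (Fin n) (Fin n) ℝ), S.PosSemidef →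
      (∀ j k, ¬(j = i ∧ k = i) → S j k = 0) →
      ∀ j k, ¬(j = i ∧ k = i) → Λ S (single i i 1) j k = 0 := by
    intro i S hS hS0 j k hjk
    set d : Fin n → ℝ := fun m => if m = i then 1 else 2 with hd
    have hdpos : ∀ m, 0 < d m := fun m => by by_cases h : m = i <;> simp [hd, h]
    have hinv : (diagonal d)⁻¹ = diagonal (fun m => (d m)⁻¹) := diag_inv d hdpos
    have hSfix : (diagonal d)⁻¹ * S * (diagonal d)⁻¹ = S := by
      rw [hinv]; ext a b
      rw [mul_diagonal, diagonal_mul]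
      by_cases hab : a = i ∧ b = i
      · simp [hd, hab.1, hab.2]
      · rw [hS0 a b hab]; ring
    have hEfix : diagonal d * single i i (1:ℝ) * diagonal d = single i i 1 := by
      ext a b
      rw [mul_diagonal, diagonal_mul]
      by_cases hab : a = i ∧ b = i
      · simp [hd, hab.1, hab.2]
      · have h0 : single i i (1:ℝ) a b = 0 := by
          simp only [single, of_apply, ite_eq_right_iff, one_ne_zero]
          intro h; exact absurd ⟨h.1.symm, h.2.symm⟩ hab
        rw [h0]; ring
    have h := hsplit S (single i i 1) hS (std_psd i) d hdpos
    rw [hSfix, hEfix, hinv] at h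
    have he := congrFun (congrFun (congrArg (fun M => M) h) j) k
    rw [mul_diagonal, diagonal_mul] at he
    -- he : Λ S E j k = (d j)⁻¹ * Λ S E j k * (d k)⁻¹
    by_cases hji : j = i
    · have hki : k ≠ i := fun hk => hjk ⟨hji, hk⟩
      subst hji
      simp only [hd, if_pos rfl, if_neg hki] at he
      norm_num at he
      linarith [he]
    · by_cases hki : k = i
      · subst hki
        simp only [hd, if_neg hji, if_pos rfl] at he
        norm_num at he
        linarith [he]
      · simp only [hd, if_neg hji, if_neg hki] at he
        norm_num at he
        linarith [he]
  -- zero lemma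
  have hzero : ∀ i : Fin n, Λ 0 (single i i 1) = 0 := by
    intro i
    have h2 := hcash 0 (single i i 1) .zero (std_psd i) 2 two_pos
    rw [smul_zero] at h2
    ext a b
    have := congrFun (congrFun h2 a) b
    rw [Matrix.smul_apply] at this
    simp only [Matrix.zero_apply, smul_eq_mul] at this ⊢
    linarith [this]
  -- E support
  have hEsupp : ∀ (i j k : Fin n), ¬(j = i ∧ k = i) → single i i (1:ℝ) j k = 0 := by
    intro i j k h
    simp only [single, of_apply, ite_eq_right_iff, one_ne_zero]
    intro hh; exact absurd ⟨hh.1.symm, hh.2.symm⟩ h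
  -- diagonal form of Λ (E i) (E i)
  have hMdiag : ∀ i : Fin n, Λ (single i i 1) (single i i 1)
      = (Λ (single i i 1) (single i i 1)) i i • single i i 1 := by
    intro i
    ext a b
    by_cases h : a = i ∧ b = i
    · obtain ⟨rfl, rfl⟩ : a = i ∧ b = i := h
      simp [single]
    · rw [hsupp i _ (std_psd i) (hEsupp i) a b h, Matrix.smul_apply, hEsupp i a b h, smul_zero]
  -- permutation invariance of the constant
  have hperm : ∀ i : Fin n,
      (Λ (single i i 1) (single i i 1)) i i
        = (Λ (single i₀ i₀ 1) (single i₀ i₀ 1)) i₀ i₀ := by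
    intro i
    set e := Equiv.swap i i₀ with he
    set O := (Matrix.of fun a b => if e a = b then (1:ℝ) else 0) with hO
    have horth := perm_orth e
    have h1 : O * (single i₀ i₀ 1) * Oᵀ = single i i 1 := by
      rw [perm_conj]
      ext a b
      simp only [of_apply, single]
      have hea : (i₀ = e a) ↔ (i = a) := by
        constructor
        · intro hh
          have : e i₀ = a := by rw [hh, Equiv.swap_apply_self]
          rw [← this, he, Equiv.swap_apply_right]
        · intro hh
          rw [← hh, he, Equiv.swap_apply_left]
      have heb : (i₀ = e b) ↔ (i = b) := by
        constructor
        · intro hh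
          have : e i₀ = b := by rw [hh, Equiv.swap_apply_self]
          rw [← this, he, Equiv.swap_apply_right]
        · intro hh
          rw [← hh, he, Equiv.swap_apply_left]
      simp [hea, heb]
    have h2 := hrot _ _ (std_psd i₀) (std_psd i₀) O horth
    rw [h1] at h2
    rw [h2, perm_conj]
    simp [he, Equiv.swap_apply_left]
  set c := (Λ (single i₀ i₀ 1) (single i₀ i₀ 1)) i₀ i₀ with hc
  have hEc : ∀ i : Fin n, Λ (single i i 1) (single i i 1) = c • single i i 1 := by
    intro i
    rw [hMdiag i, hperm i]
  -- diagonal lemma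
  have hdiag : ∀ μ : Fin n → ℝ, (∀ i, 0 ≤ μ i) →
      Λ (diagonal μ) 1 = c • diagonal (fun i => Real.sqrt (μ i)) := by
    intro μ hμ
    set σ : Fin n → ℝ := fun i => Real.sqrt (μ i) with hσ
    have hσ0 : ∀ i, 0 ≤ σ i := fun i => Real.sqrt_nonneg _
    have hd := hdirect σ (fun _ => 1) hσ0 (fun _ => zero_le_one)
    have hσσ : diagonal σ * diagonal σ = diagonal μ := by
      rw [diagonal_mul_diagonal]
      have hfun : (fun i => σ i * σ i) = μ := funext fun i => Real.mul_self_sqrt (hμ i)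
      rw [hfun]
    have h11 : diagonal (fun _ : Fin n => (1:ℝ)) * diagonal (fun _ => 1) = 1 := by
      rw [diagonal_mul_diagonal]
      simp
    rw [hσσ, h11] at hd
    rw [hd]
    have hterm : ∀ i : Fin n, Λ ((σ i ^ 2) • single i i 1) (((1:ℝ) ^ 2) • single i i 1)
        = (c * σ i) • single i i 1 := by
      intro i
      rw [one_pow, one_smul]
      rcases lt_or_eq_of_le (hσ0 i) with h | h
      · rw [hcash _ _ (std_psd i) (std_psd i) (σ i) h, hEc i, smul_smul, mul_comm]
      · rw [← h]
        simp [hzero i]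
    simp only [hterm]
    ext a b
    rw [Matrix.sum_apply, Matrix.smul_apply]
    by_cases hab : a = b
    · subst hab
      rw [Finset.sum_eq_single a]
      · simp [single, diagonal, mul_comm]
      · intro m _ hm
        simp [single, Matrix.smul_apply, hm]
      · intro hmem; exact absurd (Finset.mem_univ a) hmem
    · have : ∀ m : Fin n, ((c * σ m) • single m m (1:ℝ)) a b = 0 := by
        intro m
        rw [Matrix.smul_apply, hEsupp m a b, smul_zero]
        intro hh
        exact hab (hh.1.trans hh.2.symm)
      simp [this, diagonal, hab]
  -- conjugation by a positive definite symmetric matrix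
  have hconj : ∀ (B X Y : Matrix (Fin n) (Fin n) ℝ), B.PosDef → X.PosSemidef → Y.PosSemidef →
      Λ (B⁻¹ * X * B⁻¹) (B * Y * B) = B⁻¹ * Λ X Y * B⁻¹ := by
    intro B X Y hB hX hY
    have hH : B.IsHermitian := hB.1
    set O : Matrix (Fin n) (Fin n) ℝ := (hH.eigenvectorUnitary : Matrix (Fin n) (Fin n) ℝ) with hOdef
    set d : Fin n → ℝ := hH.eigenvalues with hddef
    have hstar : star O = Oᵀ := by
      rw [star_eq_conjTranspose, conjTranspose_eq_transpose_of_trivial]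
    have hO : O * Oᵀ = 1 := by
      rw [← hstar]; exact (Matrix.mem_unitaryGroup_iff).mp hH.eigenvectorUnitary.2
    have hO' : Oᵀ * O = 1 := mul_eq_one_comm.mp hO
    have hdpos : ∀ i, 0 < d i := hB.eigenvalues_pos
    have hBeq : B = O * diagonal d * Oᵀ := by
      have := hH.spectral_theorem
      rw [Unitary.conjStarAlgAut_apply, hstar] at this
      exact this
    have hdinv : (diagonal d)⁻¹ = diagonal (fun i => (d i)⁻¹) := diag_inv d hdpos
    have hBinv : B⁻¹ = O * (diagonal d)⁻¹ * Oᵀ := by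
      apply inv_eq_right_inv
      rw [hBeq, hdinv]
      calc O * diagonal d * Oᵀ * (O * diagonal (fun i => (d i)⁻¹) * Oᵀ)
          = O * (diagonal d * (Oᵀ * O) * diagonal (fun i => (d i)⁻¹)) * Oᵀ := by
            simp only [Matrix.mul_assoc]
        _ = O * (diagonal d * diagonal (fun i => (d i)⁻¹)) * Oᵀ := by rw [hO', mul_one]
        _ = O * Oᵀ := by
            rw [diagonal_mul_diagonal]
            have hfun : (fun i => d i * (d i)⁻¹) = fun _ => (1:ℝ) :=
              funext fun i => mul_inv_cancel₀ (hdpos i).ne'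
            rw [hfun]
            simp
        _ = 1 := hO
    set X' := Oᵀ * X * O with hX'def
    set Y' := Oᵀ * Y * O with hY'def
    have hX' : X'.PosSemidef := by
      have := hX.conjTranspose_mul_mul_same O
      rwa [conjTranspose_eq_transpose_of_trivial] at this
    have hY' : Y'.PosSemidef := by
      have := hY.conjTranspose_mul_mul_same O
      rwa [conjTranspose_eq_transpose_of_trivial] at this
    have hdiagpsd : ((diagonal d)⁻¹ * X' * (diagonal d)⁻¹).PosSemidef := by
      rw [hdinv]
      have := hX'.mul_mul_conjTranspose_same (diagonal (fun i => (d i)⁻¹))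
      rwa [conjTranspose_eq_transpose_of_trivial, diagonal_transpose] at this
    have hdiagpsd' : (diagonal d * Y' * diagonal d).PosSemidef := by
      have := hY'.mul_mul_conjTranspose_same (diagonal d)
      rwa [conjTranspose_eq_transpose_of_trivial, diagonal_transpose] at this
    have step1 : Λ (O * ((diagonal d)⁻¹ * X' * (diagonal d)⁻¹) * Oᵀ)
        (O * (diagonal d * Y' * diagonal d) * Oᵀ)
        = O * ((diagonal d)⁻¹ * Λ X' Y' * (diagonal d)⁻¹) * Oᵀ := by
      rw [hrot _ _ hdiagpsd hdiagpsd' O hO, hsplit X' Y' hX' hY' d hdpos]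
    have step2 : Λ X' Y' = Oᵀ * Λ X Y * O := by
      have := hrot X Y hX hY Oᵀ hO'
      rwa [transpose_transpose] at this
    have e1 : B⁻¹ * X * B⁻¹ = O * ((diagonal d)⁻¹ * X' * (diagonal d)⁻¹) * Oᵀ := by
      rw [hBinv, hX'def]
      simp only [Matrix.mul_assoc]
    have e2 : B * Y * B = O * (diagonal d * Y' * diagonal d) * Oᵀ := by
      rw [hBeq, hY'def]
      simp only [Matrix.mul_assoc]
    rw [e1, e2, step1, step2, hBinv]
    simp only [Matrix.mul_assoc]
  refine ⟨c, hdiag, ?_⟩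
  intro S W hS hW
  have hWpsd : W.PosSemidef := hW.posSemidef
  set B := sqrtm W with hBdef
  have hsq : sqrtm W = B := rfl
  have hBpd : B.PosDef := sqrt_posdef hW
  have hBB : B * B = W := sqrtm_mul_self' hWpsd
  have hBH : Bᴴ = B := hBpd.1
  have hdet : IsUnit B.det := hBpd.det_pos.ne'.isUnit
  have hX : (B * S * B).PosSemidef := by
    have := hS.mul_mul_conjTranspose_same B
    rwa [hBH] at this
  have happ := hconj B (B * S * B) 1 hBpd hX .one
  have e1 : B⁻¹ * (B * S * B) * B⁻¹ = S := by
    calc B⁻¹ * (B * S * B) * B⁻¹ = (B⁻¹ * B) * (S * (B * B⁻¹)) := by simp only [Matrix.mul_assoc]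
      _ = S := by rw [nonsing_inv_mul _ hdet, mul_nonsing_inv _ hdet, mul_one, one_mul]
  have e2 : B * 1 * B = W := by rw [mul_one, hBB]
  rw [e1, e2] at happ
  -- spectral decomposition of B * S * B
  have hXh : (B * S * B).IsHermitian := hX.1
  set P : Matrix (Fin n) (Fin n) ℝ := (hXh.eigenvectorUnitary : Matrix (Fin n) (Fin n) ℝ) with hPdef
  set μ : Fin n → ℝ := hXh.eigenvalues with hμdef
  have hPstar : star P = Pᵀ := by
    rw [star_eq_conjTranspose, conjTranspose_eq_transpose_of_trivial]
  have hP : P * Pᵀ = 1 := by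
    rw [← hPstar]; exact (Matrix.mem_unitaryGroup_iff).mp hXh.eigenvectorUnitary.2
  have hP' : Pᵀ * P = 1 := mul_eq_one_comm.mp hP
  have hμ0 : ∀ i, 0 ≤ μ i := hX.eigenvalues_nonneg
  have hXeq : B * S * B = P * diagonal μ * Pᵀ := by
    have := hXh.spectral_theorem
    rw [Unitary.conjStarAlgAut_apply, hPstar] at this
    exact this
  have hμpsd : (diagonal μ).PosSemidef := posSemidef_diagonal_iff.mpr fun i => hμ0 i
  have hstep := hrot (diagonal μ) 1 hμpsd .one P hP
  rw [mul_one, hP, ← hXeq] at hstep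
  -- identify the square root
  have hCpsd : (P * diagonal (fun i => Real.sqrt (μ i)) * Pᵀ).PosSemidef := by
    have hd0 : (diagonal (fun i => Real.sqrt (μ i))).PosSemidef :=
      posSemidef_diagonal_iff.mpr fun i => Real.sqrt_nonneg _
    have := hd0.mul_mul_conjTranspose_same P
    rwa [conjTranspose_eq_transpose_of_trivial] at this
  have hCsq : (P * diagonal (fun i => Real.sqrt (μ i)) * Pᵀ) ^ 2 = B * S * B := by
    rw [pow_two, hXeq]
    calc (P * diagonal (fun i => Real.sqrt (μ i)) * Pᵀ) * (P * diagonal (fun i => Real.sqrt (μ i)) * Pᵀ)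
        = P * (diagonal (fun i => Real.sqrt (μ i)) * (Pᵀ * P) * diagonal (fun i => Real.sqrt (μ i))) * Pᵀ := by
          simp only [Matrix.mul_assoc]
      _ = P * (diagonal (fun i => Real.sqrt (μ i)) * diagonal (fun i => Real.sqrt (μ i))) * Pᵀ := by
          rw [hP', mul_one]
      _ = P * diagonal μ * Pᵀ := by
          rw [diagonal_mul_diagonal]
          have hfun : (fun i => Real.sqrt (μ i) * Real.sqrt (μ i)) = μ :=
            funext fun i => Real.mul_self_sqrt (hμ0 i)
          rw [hfun]
  have hsqX : sqrtm (B * S * B) = P * diagonal (fun i => Real.sqrt (μ i)) * Pᵀ := by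
    exact sqrtm_eq_of_sq hCpsd hX hCsq
  -- put it together
  rw [happ, hstep, hdiag μ hμ0, kyle, hsq, hsqX]
  simp only [Matrix.mul_smul, Matrix.smul_mul]
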